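/- For positive integers ξ_a, ξ_b, ξ_c, ξ_d, ξ_e, if ξ_a·ξ_b·ξ_c·ξ_d·ξ_e + ξ_a·ξ_b·ξ_d·ξ_e < ξ_a·ξ_b·ξ_c·ξ_d + ξ_b·ξ_c·ξ_d·ξ_e, then ξ_a = 1 or ξ_e = 1. -/
import Mathlib


theorem stmt_4 (a b c d e : ℕ) (ha : 0 < a) (hb : 0 < b) (hc : 0 < c)
    (hd : 0 < d) (he : 0 < e)
    (h : a * b * c * d * e + a * b * d * e < a * b * c * d + b * c * d * e) :
    a = 1 ∨ e = 1 := by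
  by_contra hn
  push_neg at hn
  obtain ⟨ha1, he1⟩ := hn
  have ha2 : 2 ≤ a := by omega
  have he2 : 2 ≤ e := by omega
  have h1 : 2 * (a * b * c * d) ≤ a * b * c * d * e := by
    calc 2 * (a * b * c * d) = a * b * c * d * 2 := by ring
    _ ≤ a * b * c * d * e := Nat.mul_le_mul_left _ he2
  have h2 : 2 * (b * c * d * e) ≤ a * b * c * d * e := by
    calc 2 * (b * c * d * e) ≤ a * (b * c * d * e) := Nat.mul_le_mul_right _ ha2
    _ = a * b * c * d * e := by ring
  omega
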